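/- arXiv:2303.00862 — 8 statements merged into one kernel-verified Lean document; each statement's English description precedes it below -/
import Mathlib

section
/- Let A be a finite-dimensional evolution algebra over a field F with natural basis B = {e_1,...,e_n} and structure matrix M_B(A) (whose (k,i) entry w_{ki} satisfies e_i² = Σ_k w_{ki} e_k). If B' = {f_1,...,f_n} is another natural basis of A with change of basis matrix C = (c_{ij}) (i.e. f_j = Σ_i c_{ij} e_i), then M_{B'}(A) = C⁻¹ · M_B(A) · C^{(2)}, where C^{(2)} denotes the matrix with entries c_{ij}². -/
/-! Writing `x = ∑ᵢ xᵢ eᵢ` in a natural basis, all cross terms of `x * x` vanish, so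
`x * x = ∑ᵢ xᵢ² (eᵢ * eᵢ)`. In coordinates this says that the `e`-matrix of the squares of any
family `v` is `M_e(A) · (e.toMatrix v)^{(2)}`. Taking `v = f` and converting back to `f`-coordinates
with `f.toMatrix e = (e.toMatrix f)⁻¹` gives the formula. -/

namespace Module.Basis

theorem toMatrix_eq_of_eq_sum {ι ι' R M : Type*} [Fintype ι] [CommSemiring R] [AddCommMonoid M]
    [Module R M] (e : Basis ι R M) {v : ι' → M} {C : Matrix ι ι' R}
    (h : ∀ j, v j = ∑ i, C i j • e i) : e.toMatrix v = C := by
  ext i j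
  rw [toMatrix_apply, h, e.repr_sum_self]

variable {ι R A : Type*} [Fintype ι] [CommSemiring R] [NonUnitalNonAssocSemiring A]
  [Module R A] [SMulCommClass R A A] [IsScalarTower R A A]

theorem mul_self_eq_sum_sq_smul (e : Basis ι R A) (he : ∀ i j, i ≠ j → e i * e j = 0) (x : A) :
    x * x = ∑ i, e.repr x i ^ 2 • (e i * e i) := by
  classical
  conv_lhs => rw [← e.sum_repr x, Finset.sum_mul_sum]
  refine Finset.sum_congr rfl fun i _ => ?_
  rw [Finset.sum_eq_single i (fun j _ hji => by rw [smul_mul_smul_comm, he i j hji.symm, smul_zero])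
    (by simp), smul_mul_smul_comm, sq]

theorem toMatrix_mul_self {ι' : Type*} (e : Basis ι R A) (he : ∀ i j, i ≠ j → e i * e j = 0)
    (v : ι' → A) :
    e.toMatrix (fun j ↦ v j * v j) =
      e.toMatrix (fun i ↦ e i * e i) * (e.toMatrix v).map (· ^ 2) := by
  ext k j
  rw [toMatrix_apply, Matrix.mul_apply, mul_self_eq_sum_sq_smul e he, map_sum,
    Finsupp.finsetSum_apply]
  refine Finset.sum_congr rfl fun i _ => ?_
  rw [map_smul, Finsupp.smul_apply, smul_eq_mul, mul_comm, toMatrix_apply, Matrix.map_apply,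
    toMatrix_apply]

end Module.Basis

theorem stmt_0_general {F : Type*} [Field F] {A : Type*} [NonUnitalNonAssocRing A]
    [Module F A] [SMulCommClass F A A] [IsScalarTower F A A]
    {n : ℕ} (e f : Module.Basis (Fin n) F A)
    (he : ∀ i j : Fin n, i ≠ j → e i * e j = 0)
    (M M' C : Matrix (Fin n) (Fin n) F)
    (hM : ∀ i, e i * e i = ∑ k, M k i • e k)
    (hM' : ∀ j, f j * f j = ∑ k, M' k j • f k)
    (hC : ∀ j, f j = ∑ i, C i j • e i) :
    M' = C⁻¹ * M * C.map (· ^ 2) := by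
  obtain rfl := e.toMatrix_eq_of_eq_sum hC
  obtain rfl := e.toMatrix_eq_of_eq_sum hM
  obtain rfl := f.toMatrix_eq_of_eq_sum hM'
  rw [Matrix.inv_eq_left_inv (f.toMatrix_mul_toMatrix_flip e), Matrix.mul_assoc,
    ← e.toMatrix_mul_self he, Module.Basis.toMatrix_mul_toMatrix]

/-- **Change of natural basis for evolution algebras.**
If `e` and `f` are natural bases of an evolution algebra `A` with structure
matrices `M` and `M'`, and `C` is the change of basis matrix (`f j = ∑ i, C i j • e i`),
then `M' = C⁻¹ * M * C^{(2)}` where `C^{(2)}` has entries `c_{ij}²`. -/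
theorem stmt_0 {F : Type*} [Field F] {A : Type*} [NonUnitalNonAssocRing A]
    [Module F A] [SMulCommClass F A A] [IsScalarTower F A A]
    {n : ℕ} (e f : Module.Basis (Fin n) F A)
    (he : ∀ i j : Fin n, i ≠ j → e i * e j = 0)
    (hf : ∀ i j : Fin n, i ≠ j → f i * f j = 0)
    (M M' C : Matrix (Fin n) (Fin n) F)
    (hM : ∀ i, e i * e i = ∑ k, M k i • e k)
    (hM' : ∀ j, f j * f j = ∑ k, M' k j • f k)
    (hC : ∀ j, f j = ∑ i, C i j • e i) :
    M' = C⁻¹ * M * C.map (· ^ 2) :=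
  stmt_0_general e f he M M' C hM hM' hC
end

section
/- Let A and A' be two isomorphic non-degenerate finite-dimensional evolution algebras with standard extending evolution decompositions A = E_1 ⊕ ... ⊕ E_r and A' = E'_1 ⊕ ... ⊕ E'_s, and let φ : A → A' be an isomorphism. Then r = s and there exists a permutation σ ∈ S_r such that φ(E_i) = E'_{σ(i)} for all i. -/
set_option linter.unusedSectionVars false


open Module

/-- The product of two subspaces: the span of all products `x * y` with `x ∈ P`, `y ∈ Q`. -/
def mulSub {F : Type*} [Field F] {A : Type*} [NonUnitalNonAssocRing A] [Module F A]
    (P Q : Submodule F A) : Submodule F A :=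
  Submodule.span F {z | ∃ x ∈ P, ∃ y ∈ Q, z = x * y}

/-- A family of subspaces `E` is a standard extending evolution subspaces decomposition:
`A` is the internal direct sum of the `E k`, each `E k` is spanned by a subset of a
natural basis, `dim (E k)² = 1`, `E j · E k = 0` for `j ≠ k`, and
`dim ((E j)² + (E k)²) = 2` for `j ≠ k`. -/
def IsStdDecomp {F : Type*} [Field F] {A : Type*} [NonUnitalNonAssocRing A] [Module F A]
    {r : ℕ} (E : Fin r → Submodule F A) : Prop :=
  DirectSum.IsInternal E ∧
  (∀ k, ∃ (m : ℕ) (b : Basis (Fin m) F A),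
      (∀ i j : Fin m, i ≠ j → b i * b j = 0) ∧
      ∃ S : Set (Fin m), E k = Submodule.span F (b '' S)) ∧
  (∀ k, finrank F (mulSub (E k) (E k)) = 1) ∧
  (∀ j k, j ≠ k → mulSub (E j) (E k) = ⊥) ∧
  (∀ j k, j ≠ k → finrank F ↥(mulSub (E j) (E j) ⊔ mulSub (E k) (E k)) = 2)

namespace StdAux

variable {𝕜 : Type*} [Field 𝕜] {B : Type*} [NonUnitalNonAssocRing B] [Module 𝕜 B]
  [SMulCommClass 𝕜 B B] [IsScalarTower 𝕜 B B]

lemma mul_mem_mulSub {P Q : Submodule 𝕜 B} {x y : B} (hx : x ∈ P) (hy : y ∈ Q) :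
    x * y ∈ mulSub P Q := Submodule.subset_span ⟨x, hx, y, hy, rfl⟩

lemma mulSub_bot : (mulSub (⊥ : Submodule 𝕜 B) ⊥) = ⊥ := by
  refine le_bot_iff.mp (Submodule.span_le.mpr ?_)
  rintro z ⟨x, hx, y, hy, rfl⟩
  simp [(Submodule.mem_bot 𝕜).mp hx]

/-- Key induction principle: if a property expressed by `f a ∈ M` holds on each block,
it holds everywhere. -/
lemma key {r : ℕ} {E : Fin r → Submodule 𝕜 B} (hsup : (⨆ k, E k) = ⊤)
    {M : Submodule 𝕜 B} {f : B →ₗ[𝕜] B} (h : ∀ j, ∀ b ∈ E j, f b ∈ M) (a : B) : f a ∈ M := by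
  have hle : (⊤ : Submodule 𝕜 B) ≤ M.comap f := by
    rw [← hsup]
    exact iSup_le fun j b hb => h j b hb
  exact hle Submodule.mem_top

variable [FiniteDimensional 𝕜 B]

/-- Two distinct lines intersect trivially. -/
lemma line_inf {P Q : Submodule 𝕜 B} (hP : finrank 𝕜 P = 1) (hQ : finrank 𝕜 Q = 1)
    (hne : P ≠ Q) : P ⊓ Q = ⊥ := by
  by_contra h
  have h1 : 1 ≤ finrank 𝕜 ↥(P ⊓ Q) :=
    Nat.one_le_iff_ne_zero.mpr (fun h0 => h (Submodule.finrank_eq_zero.mp h0))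
  have e1 : P ⊓ Q = P := Submodule.eq_of_le_of_finrank_le inf_le_left (hP ▸ h1)
  have e2 : P ⊓ Q = Q := Submodule.eq_of_le_of_finrank_le inf_le_right (hQ ▸ h1)
  exact hne (e1 ▸ e2)

section family

variable {r : ℕ} {E : Fin r → Submodule 𝕜 B}

/-- (a) products of an element of `E k` with anything land in the square line of `E k`. -/
lemma prod_mem (hsup : (⨆ k, E k) = ⊤)
    (hcross : ∀ j k, j ≠ k → mulSub (E j) (E k) = ⊥) {k : Fin r} {x : B} (hx : x ∈ E k)
    (a : B) : x * a ∈ mulSub (E k) (E k) ∧ a * x ∈ mulSub (E k) (E k) := by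
  constructor
  · refine key hsup (f := LinearMap.mulLeft 𝕜 x) (fun j b hb => ?_) a
    rcases eq_or_ne k j with rfl | hjk
    · exact mul_mem_mulSub hx hb
    · have hb' : x * b ∈ mulSub (E k) (E j) := mul_mem_mulSub hx hb
      rw [hcross k j hjk] at hb'
      rw [show (LinearMap.mulLeft 𝕜 x) b = x * b from rfl, (Submodule.mem_bot 𝕜).mp hb']
      exact Submodule.zero_mem _
  · refine key hsup (f := LinearMap.mulRight 𝕜 x) (fun j b hb => ?_) a
    rcases eq_or_ne j k with rfl | hjk
    · exact mul_mem_mulSub hb hx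
    · have hb' : b * x ∈ mulSub (E j) (E k) := mul_mem_mulSub hb hx
      rw [hcross j k hjk] at hb'
      rw [show (LinearMap.mulRight 𝕜 x) b = b * x from rfl, (Submodule.mem_bot 𝕜).mp hb']
      exact Submodule.zero_mem _

/-- products of anything with an element of `E j` land in the square line of `E j`. -/
lemma prod_mem' (hsup : (⨆ k, E k) = ⊤)
    (hcross : ∀ j k, j ≠ k → mulSub (E j) (E k) = ⊥) {j : Fin r} {a : B} (ha : a ∈ E j)
    (x : B) : x * a ∈ mulSub (E j) (E j) ∧ a * x ∈ mulSub (E j) (E j) := by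
  constructor
  · refine key hsup (f := LinearMap.mulRight 𝕜 a) (fun i w hw => ?_) x
    rcases eq_or_ne i j with rfl | hij
    · exact mul_mem_mulSub hw ha
    · have hb' : w * a ∈ mulSub (E i) (E j) := mul_mem_mulSub hw ha
      rw [hcross i j hij] at hb'
      rw [show (LinearMap.mulRight 𝕜 a) w = w * a from rfl, (Submodule.mem_bot 𝕜).mp hb']
      exact Submodule.zero_mem _
  · refine key hsup (f := LinearMap.mulLeft 𝕜 a) (fun i w hw => ?_) x
    rcases eq_or_ne j i with rfl | hij
    · exact mul_mem_mulSub ha hw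
    · have hb' : a * w ∈ mulSub (E j) (E i) := mul_mem_mulSub ha hw
      rw [hcross j i hij] at hb'
      rw [show (LinearMap.mulLeft 𝕜 a) w = a * w from rfl, (Submodule.mem_bot 𝕜).mp hb']
      exact Submodule.zero_mem _

/-- distinct indices have distinct square lines. -/
lemma lines_distinct
    (hdim : ∀ k, finrank 𝕜 (mulSub (E k) (E k)) = 1)
    (hpair : ∀ j k, j ≠ k → finrank 𝕜 ↥(mulSub (E j) (E j) ⊔ mulSub (E k) (E k)) = 2)
    {j k : Fin r} (h : mulSub (E j) (E j) = mulSub (E k) (E k)) : j = k := by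
  by_contra hjk
  have := hpair j k hjk
  rw [h, sup_idem, hdim k] at this
  omega

/-- (b) the converse characterization: anything all of whose products lie in the square line
of `E k` belongs to `E k`. -/
lemma mem_of_prod (hnd : ∀ x : B, (∀ a : B, x * a = 0 ∧ a * x = 0) → x = 0)
    (hsup : (⨆ k, E k) = ⊤)
    (hdim : ∀ k, finrank 𝕜 (mulSub (E k) (E k)) = 1)
    (hcross : ∀ j k, j ≠ k → mulSub (E j) (E k) = ⊥)
    (hpair : ∀ j k, j ≠ k → finrank 𝕜 ↥(mulSub (E j) (E j) ⊔ mulSub (E k) (E k)) = 2)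
    {k : Fin r} {x : B}
    (h : ∀ a : B, x * a ∈ mulSub (E k) (E k) ∧ a * x ∈ mulSub (E k) (E k)) : x ∈ E k := by
  set N : Submodule 𝕜 B := ⨆ (i) (_ : i ≠ k), E i with hN
  have htop : E k ⊔ N = ⊤ := by
    rw [← hsup]
    refine le_antisymm (sup_le (le_iSup E k) (iSup₂_le fun i _ => le_iSup E i))
      (iSup_le fun i => ?_)
    rcases eq_or_ne i k with rfl | hik
    · exact le_sup_left
    · exact le_trans (le_iSup₂ (f := fun i (_ : i ≠ k) => E i) i hik) le_sup_right
  obtain ⟨y, hy, z, hz, hyz⟩ := Submodule.mem_sup.mp (htop ▸ Submodule.mem_top (x := x))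
  -- per-block: z * a = 0 and a * z = 0 for a in any block
  have hblock : ∀ j, ∀ a ∈ E j, z * a = 0 ∧ a * z = 0 := by
    intro j a ha
    rcases eq_or_ne j k with rfl | hjk
    · constructor
      · have : z ∈ Submodule.comap (LinearMap.mulRight 𝕜 a) (⊥ : Submodule 𝕜 B) := by
          refine (iSup₂_le fun i hik => fun w hw => ?_ : N ≤ _) hz
          have : w * a ∈ mulSub (E i) (E j) := mul_mem_mulSub hw ha
          rw [hcross i j hik] at this
          simpa using this
        simpa using this
      · have : z ∈ Submodule.comap (LinearMap.mulLeft 𝕜 a) (⊥ : Submodule 𝕜 B) := by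
          refine (iSup₂_le fun i hik => fun w hw => ?_ : N ≤ _) hz
          have : a * w ∈ mulSub (E j) (E i) := mul_mem_mulSub ha hw
          rw [hcross j i (Ne.symm hik)] at this
          simpa using this
        simpa using this
    · have hinf : mulSub (E k) (E k) ⊓ mulSub (E j) (E j) = ⊥ :=
        line_inf (hdim k) (hdim j)
          (fun he => hjk (lines_distinct hdim hpair he.symm))
      have hz_eq : z = x - y := by rw [← hyz]; exact (add_sub_cancel_left y z).symm
      constructor
      · have h1 : z * a ∈ mulSub (E k) (E k) := by
          rw [hz_eq, sub_mul]
          exact Submodule.sub_mem _ (h a).1 (prod_mem hsup hcross hy a).1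
        have h2 : z * a ∈ mulSub (E j) (E j) := by
          have : z ∈ Submodule.comap (LinearMap.mulRight 𝕜 a) (mulSub (E j) (E j)) := by
            refine (iSup₂_le fun i _ => fun w hw => ?_ : N ≤ _) hz
            rcases eq_or_ne i j with rfl | hij
            · exact mul_mem_mulSub hw ha
            · have : w * a ∈ mulSub (E i) (E j) := mul_mem_mulSub hw ha
              rw [hcross i j hij] at this
              simp only [Submodule.mem_comap]
              rw [show (LinearMap.mulRight 𝕜 a) w = w * a from rfl,
                (Submodule.mem_bot 𝕜).mp this]
              exact Submodule.zero_mem _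
          simpa using this
        have : z * a ∈ (⊥ : Submodule 𝕜 B) := hinf ▸ Submodule.mem_inf.mpr ⟨h1, h2⟩
        simpa using this
      · have h1 : a * z ∈ mulSub (E k) (E k) := by
          rw [hz_eq, mul_sub]
          exact Submodule.sub_mem _ (h a).2 (prod_mem hsup hcross hy a).2
        have h2 : a * z ∈ mulSub (E j) (E j) := by
          have : z ∈ Submodule.comap (LinearMap.mulLeft 𝕜 a) (mulSub (E j) (E j)) := by
            refine (iSup₂_le fun i _ => fun w hw => ?_ : N ≤ _) hz
            rcases eq_or_ne i j with rfl | hij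
            · exact mul_mem_mulSub ha hw
            · have : a * w ∈ mulSub (E j) (E i) := mul_mem_mulSub ha hw
              rw [hcross j i (Ne.symm hij)] at this
              simp only [Submodule.mem_comap]
              rw [show (LinearMap.mulLeft 𝕜 a) w = a * w from rfl,
                (Submodule.mem_bot 𝕜).mp this]
              exact Submodule.zero_mem _
          simpa using this
        have : a * z ∈ (⊥ : Submodule 𝕜 B) := hinf ▸ Submodule.mem_inf.mpr ⟨h1, h2⟩
        simpa using this
  have hzz : z = 0 := by
    refine hnd z fun a => ?_
    constructor
    · have : z * a ∈ (⊥ : Submodule 𝕜 B) :=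
        key hsup (f := LinearMap.mulLeft 𝕜 z)
          (fun j b hb => by simpa using (hblock j b hb).1) a
      simpa using this
    · have : a * z ∈ (⊥ : Submodule 𝕜 B) :=
        key hsup (f := LinearMap.mulRight 𝕜 z)
          (fun j b hb => by simpa using (hblock j b hb).2) a
      simpa using this
  rw [← hyz, hzz, add_zero]
  exact hy

end family

/-- Main matching lemma: every square line of the first decomposition is a square line of the
second one. -/
lemma exists_match {r s : ℕ} {E : Fin r → Submodule 𝕜 B} {E' : Fin s → Submodule 𝕜 B}
    (hnd : ∀ x : B, (∀ a : B, x * a = 0 ∧ a * x = 0) → x = 0)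
    (hsup : (⨆ k, E k) = ⊤)
    (hdim : ∀ k, finrank 𝕜 (mulSub (E k) (E k)) = 1)
    (hcross : ∀ j k, j ≠ k → mulSub (E j) (E k) = ⊥)
    (hsup' : (⨆ k, E' k) = ⊤)
    (hdim' : ∀ k, finrank 𝕜 (mulSub (E' k) (E' k)) = 1)
    (hcross' : ∀ j k, j ≠ k → mulSub (E' j) (E' k) = ⊥)
    (k : Fin r) : ∃ j : Fin s, mulSub (E k) (E k) = mulSub (E' j) (E' j) := by
  -- E k is nontrivial
  have hEk : E k ≠ ⊥ := by
    intro hbot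
    have := hdim k
    rw [hbot, mulSub_bot] at this
    rw [finrank_bot] at this
    omega
  obtain ⟨x, hx, hx0⟩ := (Submodule.ne_bot_iff _).mp hEk
  by_contra hno
  push_neg at hno
  apply hx0
  refine hnd x fun a => ?_
  constructor
  · have : x * a ∈ (⊥ : Submodule 𝕜 B) := by
      refine key hsup' (f := LinearMap.mulLeft 𝕜 x) (fun j b hb => ?_) a
      have h1 : x * b ∈ mulSub (E k) (E k) := (prod_mem hsup hcross hx b).1
      have h2 : x * b ∈ mulSub (E' j) (E' j) := (prod_mem' hsup' hcross' hb x).1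
      have hinf := line_inf (hdim k) (hdim' j) (hno j)
      exact (Submodule.mem_bot 𝕜).mpr ((Submodule.mem_bot 𝕜).mp
        (hinf ▸ Submodule.mem_inf.mpr ⟨h1, h2⟩))
    simpa using this
  · have : a * x ∈ (⊥ : Submodule 𝕜 B) := by
      refine key hsup' (f := LinearMap.mulRight 𝕜 x) (fun j b hb => ?_) a
      have h1 : b * x ∈ mulSub (E k) (E k) := (prod_mem hsup hcross hx b).2
      have h2 : b * x ∈ mulSub (E' j) (E' j) := (prod_mem' hsup' hcross' hb x).2
      have hinf := line_inf (hdim k) (hdim' j) (hno j)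
      exact (Submodule.mem_bot 𝕜).mpr ((Submodule.mem_bot 𝕜).mp
        (hinf ▸ Submodule.mem_inf.mpr ⟨h1, h2⟩))
    simpa using this

/-- Uniqueness of standard decompositions (reduced hypotheses). -/
lemma unique {r s : ℕ} {E : Fin r → Submodule 𝕜 B} {E' : Fin s → Submodule 𝕜 B}
    (hnd : ∀ x : B, (∀ a : B, x * a = 0 ∧ a * x = 0) → x = 0)
    (hsup : (⨆ k, E k) = ⊤)
    (hdim : ∀ k, finrank 𝕜 (mulSub (E k) (E k)) = 1)
    (hcross : ∀ j k, j ≠ k → mulSub (E j) (E k) = ⊥)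
    (hpair : ∀ j k, j ≠ k → finrank 𝕜 ↥(mulSub (E j) (E j) ⊔ mulSub (E k) (E k)) = 2)
    (hsup' : (⨆ k, E' k) = ⊤)
    (hdim' : ∀ k, finrank 𝕜 (mulSub (E' k) (E' k)) = 1)
    (hcross' : ∀ j k, j ≠ k → mulSub (E' j) (E' k) = ⊥)
    (hpair' : ∀ j k, j ≠ k → finrank 𝕜 ↥(mulSub (E' j) (E' j) ⊔ mulSub (E' k) (E' k)) = 2) :
    r = s ∧ ∃ σ : Fin r ≃ Fin s, ∀ k, E k = E' (σ k) := by
  have hex : ∀ k, ∃ j, mulSub (E k) (E k) = mulSub (E' j) (E' j) :=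
    exists_match hnd hsup hdim hcross hsup' hdim' hcross'
  have hex' : ∀ j, ∃ k, mulSub (E' j) (E' j) = mulSub (E k) (E k) :=
    exists_match hnd hsup' hdim' hcross' hsup hdim hcross
  choose σ0 hσ0 using hex
  choose τ0 hτ0 using hex'
  have hleft : Function.LeftInverse τ0 σ0 := fun k =>
    lines_distinct hdim hpair (((hσ0 k).trans (hτ0 (σ0 k))).symm)
  have hright : Function.RightInverse τ0 σ0 := fun j =>
    lines_distinct hdim' hpair' (((hτ0 j).trans (hσ0 (τ0 j))).symm)
  let e : Fin r ≃ Fin s := ⟨σ0, τ0, hleft, hright⟩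
  refine ⟨by simpa using Fintype.card_congr e, e, fun k => ?_⟩
  show E k = E' (σ0 k)
  apply le_antisymm
  · intro x hx
    refine mem_of_prod hnd hsup' hdim' hcross' hpair' (fun a => ?_)
    rw [← hσ0 k]
    exact prod_mem hsup hcross hx a
  · intro x hx
    refine mem_of_prod hnd hsup hdim hcross hpair (fun a => ?_)
    rw [hσ0 k]
    exact prod_mem hsup' hcross' hx a

end StdAux

section transport

variable {𝕜 : Type*} [Field 𝕜] {B : Type*} [NonUnitalNonAssocRing B] [Module 𝕜 B]
  {B' : Type*} [NonUnitalNonAssocRing B'] [Module 𝕜 B']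

lemma mulSub_map (φ : B ≃ₗ[𝕜] B') (hφ : ∀ x y : B, φ (x * y) = φ x * φ y)
    (P Q : Submodule 𝕜 B) :
    mulSub (P.map (φ : B →ₗ[𝕜] B')) (Q.map (φ : B →ₗ[𝕜] B')) =
      (mulSub P Q).map (φ : B →ₗ[𝕜] B') := by
  unfold mulSub
  rw [Submodule.map_span]
  congr 1
  ext z
  constructor
  · rintro ⟨x', hx', y', hy', rfl⟩
    obtain ⟨x, hx, rfl⟩ := hx'
    obtain ⟨y, hy, rfl⟩ := hy'
    exact ⟨x * y, ⟨x, hx, y, hy, rfl⟩, hφ x y⟩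
  · rintro ⟨z0, ⟨x, hx, y, hy, rfl⟩, rfl⟩
    exact ⟨φ x, ⟨x, hx, rfl⟩, φ y, ⟨y, hy, rfl⟩, hφ x y⟩

end transport

/-- **Isomorphisms respect the standard decomposition.** If `φ : A ≃ A'` is an isomorphism
of non-degenerate evolution algebras with standard decompositions `E` (length `r`) and
`E'` (length `s`), then `r = s` and there is a permutation `σ` with `φ(E k) = E' (σ k)`. -/
theorem stmt_2 {F : Type*} [Field F]
    {A : Type*} [NonUnitalNonAssocRing A] [Module F A]
    [SMulCommClass F A A] [IsScalarTower F A A] [FiniteDimensional F A]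
    {A' : Type*} [NonUnitalNonAssocRing A'] [Module F A']
    [SMulCommClass F A' A'] [IsScalarTower F A' A'] [FiniteDimensional F A']
    (hnd : ∀ x : A, (∀ a : A, x * a = 0 ∧ a * x = 0) → x = 0)
    (hnd' : ∀ x : A', (∀ a : A', x * a = 0 ∧ a * x = 0) → x = 0)
    {r s : ℕ} (E : Fin r → Submodule F A) (E' : Fin s → Submodule F A')
    (hE : IsStdDecomp E) (hE' : IsStdDecomp E')
    (φ : A ≃ₗ[F] A') (hφ : ∀ x y : A, φ (x * y) = φ x * φ y) :
    r = s ∧ ∃ σ : Fin r ≃ Fin s, ∀ k, (E k).map (φ : A →ₗ[F] A') = E' (σ k) := by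
  obtain ⟨hint, -, hdim, hcross, hpair⟩ := hE
  obtain ⟨hint', -, hdim', hcross', hpair'⟩ := hE'
  set G : Fin r → Submodule F A' := fun k => (E k).map (φ : A →ₗ[F] A') with hG
  have hsup : (⨆ k, E k) = ⊤ := hint.submodule_iSup_eq_top
  have hsupG : (⨆ k, G k) = ⊤ := by
    rw [hG, ← Submodule.map_iSup, hsup, Submodule.map_top, LinearEquiv.range]
  have hdimG : ∀ k, finrank F (mulSub (G k) (G k)) = 1 := fun k => by
    rw [hG, mulSub_map φ hφ, LinearEquiv.finrank_map_eq]
    exact hdim k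
  have hcrossG : ∀ j k, j ≠ k → mulSub (G j) (G k) = ⊥ := fun j k hjk => by
    rw [hG, mulSub_map φ hφ, hcross j k hjk, Submodule.map_bot]
  have hpairG : ∀ j k, j ≠ k →
      finrank F ↥(mulSub (G j) (G j) ⊔ mulSub (G k) (G k)) = 2 := fun j k hjk => by
    rw [hG, mulSub_map φ hφ, mulSub_map φ hφ, ← Submodule.map_sup,
      LinearEquiv.finrank_map_eq]
    exact hpair j k hjk
  exact StdAux.unique hnd' hsupG hdimG hcrossG hpairG
    hint'.submodule_iSup_eq_top hdim' hcross' hpair'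
end

section
/- If A and A' are two isomorphic non-degenerate finite-dimensional evolution algebras, then their δ-indices coincide: δ(A) = δ(A'). -/
/-!
In a non-degenerate algebra, a block `E k` of the standard decomposition is recovered from the
line `L = (E k)²` alone, as the set of `x` with `x A + A x ⊆ L`: the component of such an `x`
in any other block `E j` multiplies `E j` into `L ∩ (E j)² = 0`, and annihilates every other
block anyway, so it vanishes. Moreover every line `(E k)²` must be one of the lines `(E' j)²` of
any other such decomposition `E'`, since otherwise the same argument, run against `E'`, kills
`E k`. Hence the standard decomposition is unique up to reindexing, and an isomorphism carries
it to the standard decomposition of the target.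
-/

open Module

section Product

variable {F : Type*} [Field F] {A : Type*} [NonUnitalNonAssocRing A] [Module F A]

lemma mul_mem_mulSub {P Q : Submodule F A} {x y : A} (hx : x ∈ P) (hy : y ∈ Q) :
    x * y ∈ mulSub P Q :=
  Submodule.subset_span ⟨x, hx, y, hy, rfl⟩

lemma mulSub_bot_left (Q : Submodule F A) : mulSub ⊥ Q = ⊥ := by
  rw [mulSub, Submodule.span_eq_bot]
  rintro z ⟨x, hx, y, -, rfl⟩
  rw [(Submodule.mem_bot F).1 hx, zero_mul]

lemma map_mulSub {A' : Type*} [NonUnitalNonAssocRing A'] [Module F A'] (φ : A ≃ₗ[F] A')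
    (hφ : ∀ x y : A, φ (x * y) = φ x * φ y) (P Q : Submodule F A) :
    (mulSub P Q).map (φ : A →ₗ[F] A')
      = mulSub (P.map (φ : A →ₗ[F] A')) (Q.map (φ : A →ₗ[F] A')) := by
  rw [mulSub, mulSub, Submodule.map_span]
  congr 1
  ext z
  constructor
  · rintro ⟨w, ⟨a, ha, b, hb, rfl⟩, rfl⟩
    exact ⟨φ a, ⟨a, ha, rfl⟩, φ b, ⟨b, hb, rfl⟩, hφ a b⟩
  · rintro ⟨x, ⟨a, ha, rfl⟩, y, ⟨b, hb, rfl⟩, rfl⟩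
    exact ⟨a * b, ⟨a, ha, b, hb, rfl⟩, hφ a b⟩

variable [SMulCommClass F A A] [IsScalarTower F A A]

def twoSidedConductor (L : Submodule F A) : Submodule F A where
  carrier := {x | ∀ a : A, x * a ∈ L ∧ a * x ∈ L}
  add_mem' {x y} hx hy a := by
    rw [add_mul, mul_add]
    exact ⟨L.add_mem (hx a).1 (hy a).1, L.add_mem (hx a).2 (hy a).2⟩
  zero_mem' a := by
    rw [zero_mul, mul_zero]
    exact ⟨L.zero_mem, L.zero_mem⟩
  smul_mem' c x hx a := by
    rw [smul_mul_assoc, mul_smul_comm]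
    exact ⟨L.smul_mem c (hx a).1, L.smul_mem c (hx a).2⟩

end Product

/-- The properties of a standard decomposition on which its uniqueness rests. -/
structure IsSquareLineDecomp {F : Type*} [Field F] {A : Type*} [NonUnitalNonAssocRing A]
    [Module F A] {r : ℕ} (E : Fin r → Submodule F A) : Prop where
  iSup_eq_top : ⨆ k, E k = ⊤
  isAtom_sq : ∀ k, IsAtom (mulSub (E k) (E k))
  mulSub_eq_bot : ∀ j k, j ≠ k → mulSub (E j) (E k) = ⊥
  sq_injective : Function.Injective fun k => mulSub (E k) (E k)

section Decomp

variable {F : Type*} [Field F] {A : Type*} [NonUnitalNonAssocRing A] [Module F A]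
  {r : ℕ} {E : Fin r → Submodule F A}

lemma IsStdDecomp.isSquareLineDecomp (hE : IsStdDecomp E) : IsSquareLineDecomp E := by
  obtain ⟨hint, -, hsq, hcross, hrank⟩ := hE
  refine ⟨hint.submodule_iSup_eq_top, fun k => Submodule.isAtom_iff_finrank_eq_one.2 (hsq k),
    hcross, fun j k hjk => ?_⟩
  by_contra hne
  have h := hrank j k hne
  rw [show mulSub (E j) (E j) = mulSub (E k) (E k) from hjk, sup_idem, hsq k] at h
  omega

lemma IsSquareLineDecomp.map {A' : Type*} [NonUnitalNonAssocRing A'] [Module F A']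
    (hE : IsSquareLineDecomp E) (φ : A ≃ₗ[F] A')
    (hφ : ∀ x y : A, φ (x * y) = φ x * φ y) :
    IsSquareLineDecomp fun k => (E k).map (φ : A →ₗ[F] A') where
  iSup_eq_top := by
    rw [← Submodule.map_iSup, hE.iSup_eq_top, Submodule.map_top, LinearEquiv.range]
  isAtom_sq k := by
    rw [← map_mulSub φ hφ, Submodule.isAtom_iff_finrank_eq_one, LinearEquiv.finrank_map_eq,
      ← Submodule.isAtom_iff_finrank_eq_one]
    exact hE.isAtom_sq k
  mulSub_eq_bot j k hjk := by
    rw [← map_mulSub φ hφ, hE.mulSub_eq_bot j k hjk, Submodule.map_bot]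
  sq_injective j k hjk := by
    simp only [← map_mulSub φ hφ] at hjk
    exact hE.sq_injective (Submodule.map_injective_of_injective φ.injective hjk)

namespace IsSquareLineDecomp

variable (hE : IsSquareLineDecomp E)
include hE

lemma mul_eq_zero {j k : Fin r} {x y : A} (hx : x ∈ E j) (hy : y ∈ E k) (hjk : j ≠ k) :
    x * y = 0 := by
  simpa [hE.mulSub_eq_bot j k hjk] using mul_mem_mulSub (F := F) hx hy

lemma exists_sum_eq (x : A) : ∃ c : Fin r → A, (∀ i, c i ∈ E i) ∧ ∑ i, c i = x := by
  have hx : x ∈ ⨆ i, E i := by rw [hE.iSup_eq_top]; trivial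
  obtain ⟨c, hc, hsum⟩ := (Submodule.mem_iSup_iff_exists_finsupp E x).1 hx
  exact ⟨c, hc, by rwa [Finsupp.sum_fintype _ _ fun _ => rfl] at hsum⟩

lemma sum_mul {c : Fin r → A} (hc : ∀ i, c i ∈ E i) {j : Fin r} {y : A} (hy : y ∈ E j) :
    (∑ i, c i) * y = c j * y := by
  rw [Finset.sum_mul]
  exact Finset.sum_eq_single_of_mem j (Finset.mem_univ j)
    fun i _ hij => hE.mul_eq_zero (hc i) hy hij

lemma mul_sum {c : Fin r → A} (hc : ∀ i, c i ∈ E i) {j : Fin r} {y : A} (hy : y ∈ E j) :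
    y * ∑ i, c i = y * c j := by
  rw [Finset.mul_sum]
  exact Finset.sum_eq_single_of_mem j (Finset.mem_univ j)
    fun i _ hij => hE.mul_eq_zero hy (hc i) (Ne.symm hij)

lemma ne_bot (k : Fin r) : E k ≠ ⊥ := fun h =>
  (hE.isAtom_sq k).ne_bot (by rw [h, mulSub_bot_left])

lemma injective : Function.Injective E := fun j k hjk =>
  hE.sq_injective (by simp only [hjk])

lemma disjoint_sq {j k : Fin r} (hjk : j ≠ k) :
    Disjoint (mulSub (E j) (E j)) (mulSub (E k) (E k)) :=
  (hE.isAtom_sq j).disjoint_of_ne (hE.isAtom_sq k) (hE.sq_injective.ne hjk)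

lemma eq_zero_of_mul_eq_zero (hnd : ∀ x : A, (∀ a : A, x * a = 0 ∧ a * x = 0) → x = 0)
    {j : Fin r} {x : A} (hx : x ∈ E j)
    (h : ∀ y ∈ E j, x * y = 0 ∧ y * x = 0) : x = 0 :=
  hnd x fun a => by
    obtain ⟨c, hc, rfl⟩ := hE.exists_sum_eq a
    rw [hE.mul_sum hc hx, hE.sum_mul hc hx]
    exact h (c j) (hc j)

variable [SMulCommClass F A A] [IsScalarTower F A A]

lemma le_twoSidedConductor_sq (k : Fin r) :
    E k ≤ twoSidedConductor (mulSub (E k) (E k)) := by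
  intro x hx a
  obtain ⟨c, hc, rfl⟩ := hE.exists_sum_eq a
  rw [hE.mul_sum hc hx, hE.sum_mul hc hx]
  exact ⟨mul_mem_mulSub hx (hc k), mul_mem_mulSub (hc k) hx⟩

lemma component_eq_zero (hnd : ∀ x : A, (∀ a : A, x * a = 0 ∧ a * x = 0) → x = 0)
    {L : Submodule F A} {c : Fin r → A} (hc : ∀ i, c i ∈ E i)
    (hx : ∑ i, c i ∈ twoSidedConductor L) {j : Fin r} (hj : Disjoint L (mulSub (E j) (E j))) :
    c j = 0 := by
  refine hE.eq_zero_of_mul_eq_zero hnd (hc j) fun y hy => ?_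
  have hL := hx y
  rw [hE.sum_mul hc hy, hE.mul_sum hc hy] at hL
  exact ⟨Submodule.disjoint_def.1 hj _ hL.1 (mul_mem_mulSub (hc j) hy),
    Submodule.disjoint_def.1 hj _ hL.2 (mul_mem_mulSub hy (hc j))⟩

lemma twoSidedConductor_eq_bot (hnd : ∀ x : A, (∀ a : A, x * a = 0 ∧ a * x = 0) → x = 0)
    {L : Submodule F A} (hL : ∀ j, Disjoint L (mulSub (E j) (E j))) :
    twoSidedConductor L = ⊥ := by
  refine (Submodule.eq_bot_iff _).2 fun x hx => ?_
  obtain ⟨c, hc, rfl⟩ := hE.exists_sum_eq x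
  exact Finset.sum_eq_zero fun j _ => hE.component_eq_zero hnd hc hx (hL j)

lemma twoSidedConductor_sq (hnd : ∀ x : A, (∀ a : A, x * a = 0 ∧ a * x = 0) → x = 0)
    (k : Fin r) : twoSidedConductor (mulSub (E k) (E k)) = E k := by
  refine le_antisymm (fun x hx => ?_) (hE.le_twoSidedConductor_sq k)
  obtain ⟨c, hc, rfl⟩ := hE.exists_sum_eq x
  rw [Finset.sum_eq_single_of_mem k (Finset.mem_univ k)
    fun j _ hjk => hE.component_eq_zero hnd hc hx (hE.disjoint_sq hjk.symm)]
  exact hc k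

lemma exists_eq_of_isSquareLineDecomp
    (hnd : ∀ x : A, (∀ a : A, x * a = 0 ∧ a * x = 0) → x = 0)
    {s : ℕ} {D : Fin s → Submodule F A} (hD : IsSquareLineDecomp D) (k : Fin s) :
    ∃ j, D k = E j := by
  obtain ⟨j, hj⟩ : ∃ j, mulSub (D k) (D k) = mulSub (E j) (E j) := by
    by_contra! hne
    refine hD.ne_bot k (eq_bot_iff.2 ?_)
    rw [← hE.twoSidedConductor_eq_bot hnd
      fun j => (hD.isAtom_sq k).disjoint_of_ne (hE.isAtom_sq j) (hne j)]
    exact hD.le_twoSidedConductor_sq k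
  exact ⟨j, by rw [← hD.twoSidedConductor_sq hnd, hj, hE.twoSidedConductor_sq hnd]⟩

lemma exists_equiv (hnd : ∀ x : A, (∀ a : A, x * a = 0 ∧ a * x = 0) → x = 0)
    {s : ℕ} {D : Fin s → Submodule F A} (hD : IsSquareLineDecomp D) :
    ∃ e : Fin s ≃ Fin r, ∀ k, D k = E (e k) := by
  have hrange : Set.range D = Set.range E := by
    refine Set.Subset.antisymm ?_ ?_ <;> rintro _ ⟨k, rfl⟩
    · obtain ⟨j, hj⟩ := hE.exists_eq_of_isSquareLineDecomp hnd hD k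
      exact ⟨j, hj.symm⟩
    · obtain ⟨j, hj⟩ := hD.exists_eq_of_isSquareLineDecomp hnd hE k
      exact ⟨j, hj.symm⟩
  refine ⟨(Equiv.ofInjective D hD.injective).trans
    ((Equiv.setCongr hrange).trans (Equiv.ofInjective E hE.injective).symm), fun k => ?_⟩
  rw [Equiv.trans_apply, Equiv.trans_apply, Equiv.apply_ofInjective_symm hE.injective]
  rfl

end IsSquareLineDecomp

end Decomp

theorem stmt_3_general {F : Type*} [Field F]
    {A : Type*} [NonUnitalNonAssocRing A] [Module F A]
    {A' : Type*} [NonUnitalNonAssocRing A'] [Module F A']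
    [SMulCommClass F A' A'] [IsScalarTower F A' A']
    (hnd' : ∀ x : A', (∀ a : A', x * a = 0 ∧ a * x = 0) → x = 0)
    {r s : ℕ} (E : Fin r → Submodule F A) (E' : Fin s → Submodule F A')
    (hE : IsStdDecomp E) (hE' : IsStdDecomp E')
    (φ : A ≃ₗ[F] A') (hφ : ∀ x y : A, φ (x * y) = φ x * φ y) :
    r = s ∧ ∃ σ : Fin r ≃ Fin s, ∀ k, finrank F (E k) = finrank F (E' (σ k)) := by
  obtain ⟨σ, hσ⟩ :=
    hE'.isSquareLineDecomp.exists_equiv hnd' (hE.isSquareLineDecomp.map φ hφ)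
  refine ⟨by simpa using Fintype.card_congr σ, σ, fun k => ?_⟩
  rw [← hσ k, LinearEquiv.finrank_map_eq]

/-- **Isomorphisms respect the standard decomposition.** If `φ : A ≃ A'` is an isomorphism
of non-degenerate evolution algebras with standard decompositions `E` (length `r`) and
`E'` (length `s`), then `r = s` and there is a permutation `σ` with `dim E k = dim E' (σ k)` (δ-index equality). -/
theorem stmt_3 {F : Type*} [Field F]
    {A : Type*} [NonUnitalNonAssocRing A] [Module F A]
    [SMulCommClass F A A] [IsScalarTower F A A] [FiniteDimensional F A]
    {A' : Type*} [NonUnitalNonAssocRing A'] [Module F A']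
    [SMulCommClass F A' A'] [IsScalarTower F A' A'] [FiniteDimensional F A']
    (hnd : ∀ x : A, (∀ a : A, x * a = 0 ∧ a * x = 0) → x = 0)
    (hnd' : ∀ x : A', (∀ a : A', x * a = 0 ∧ a * x = 0) → x = 0)
    {r s : ℕ} (E : Fin r → Submodule F A) (E' : Fin s → Submodule F A')
    (hE : IsStdDecomp E) (hE' : IsStdDecomp E')
    (φ : A ≃ₗ[F] A') (hφ : ∀ x y : A, φ (x * y) = φ x * φ y) :
    r = s ∧ ∃ σ : Fin r ≃ Fin s, ∀ k, finrank F (E k) = finrank F (E' (σ k)) :=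
  stmt_3_general hnd' E E' hE hE' φ hφ
end

section
/- The two-dimensional evolution algebras A with multiplication e_1² = e_1, e_2² = e_2 and A' with multiplication e_1² = e_2, e_2² = e_1 (over an algebraically closed field of characteristic zero) are non-degenerate, both have δ-index (1,1), and A is not isomorphic to A'. -/
open Module

/-- The evolution algebra `A` on `F²`: `e₁² = e₁`, `e₂² = e₂`, `e₁e₂ = 0`. -/
def mulA {F : Type*} [Field F] (x y : Fin 2 → F) : Fin 2 → F :=
  fun k => x k * y k

/-- The evolution algebra `A'` on `F²`: `e₁² = e₂`, `e₂² = e₁`, `e₁e₂ = 0`. -/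
def mulA' {F : Type*} [Field F] (x y : Fin 2 → F) : Fin 2 → F :=
  ![x 1 * y 1, x 0 * y 0]

/-- Non-degeneracy: the annihilator of the algebra with product `μ` is trivial. -/
def Nondeg {F : Type*} [Field F] {V : Type*} [AddCommGroup V] [Module F V]
    (μ : V → V → V) : Prop :=
  ∀ x : V, (∀ a : V, μ x a = 0 ∧ μ a x = 0) → x = 0

/-- Product of subspaces relative to the product `μ`. -/
def mulSubμ {F : Type*} [Field F] {V : Type*} [AddCommGroup V] [Module F V]
    (μ : V → V → V) (P Q : Submodule F V) : Submodule F V :=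
  Submodule.span F {z | ∃ x ∈ P, ∃ y ∈ Q, z = μ x y}

/-- Standard extending evolution subspaces decomposition for the algebra `(V, μ)`. -/
def IsStdDecompμ {F : Type*} [Field F] {V : Type*} [AddCommGroup V] [Module F V]
    (μ : V → V → V) {r : ℕ} (E : Fin r → Submodule F V) : Prop :=
  DirectSum.IsInternal E ∧
  (∀ k, ∃ (m : ℕ) (b : Basis (Fin m) F V),
      (∀ i j : Fin m, i ≠ j → μ (b i) (b j) = 0) ∧
      ∃ S : Set (Fin m), E k = Submodule.span F (b '' S)) ∧
  (∀ k, finrank F (mulSubμ μ (E k) (E k)) = 1) ∧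
  (∀ j k, j ≠ k → mulSubμ μ (E j) (E k) = ⊥) ∧
  (∀ j k, j ≠ k → finrank F ↥(mulSubμ μ (E j) (E j) ⊔ mulSubμ μ (E k) (E k)) = 2)

section Aux

variable {F : Type*} [Field F]

lemma single_eq_basisFun : (fun k : Fin 2 => (Pi.single k 1 : Fin 2 → F)) = ⇑(Pi.basisFun F (Fin 2)) := by
  funext k; simp

lemma single_ne_zero' (k : Fin 2) : (Pi.single k 1 : Fin 2 → F) ≠ 0 := by
  intro h
  have := congrFun h k
  simp at this

lemma span_single_sup_top :
    Submodule.span F {(Pi.single 0 1 : Fin 2 → F)} ⊔ Submodule.span F {(Pi.single 1 1 : Fin 2 → F)} = ⊤ := by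
  rw [Submodule.eq_top_iff']
  intro x
  have hx : x = x 0 • (Pi.single 0 1 : Fin 2 → F) + x 1 • (Pi.single 1 1 : Fin 2 → F) := by
    funext l; fin_cases l <;> simp
  rw [hx]
  exact Submodule.add_mem _
    (Submodule.mem_sup_left (Submodule.smul_mem _ _ (Submodule.subset_span rfl)))
    (Submodule.mem_sup_right (Submodule.smul_mem _ _ (Submodule.subset_span rfl)))

lemma isInternal_single :
    DirectSum.IsInternal (fun k : Fin 2 => Submodule.span F {(Pi.single k 1 : Fin 2 → F)}) := by
  have hli : LinearIndependent F (fun k : Fin 2 => (Pi.single k 1 : Fin 2 → F)) := by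
    rw [single_eq_basisFun]; exact (Pi.basisFun F (Fin 2)).linearIndependent
  apply DirectSum.isInternal_submodule_of_iSupIndep_of_iSup_eq_top
  · exact hli.iSupIndep_span_singleton
  · rw [← Submodule.span_range_eq_iSup, single_eq_basisFun]
    exact (Pi.basisFun F (Fin 2)).span_eq

lemma mulSub_span_singleton {V : Type*} [AddCommGroup V] [Module F V]
    (μ : V → V → V) (h1 : ∀ (a : F) x y, μ (a • x) y = a • μ x y)
    (h2 : ∀ (a : F) x y, μ x (a • y) = a • μ x y) (v w : V) :
    mulSubμ μ (Submodule.span F {v}) (Submodule.span F {w}) = Submodule.span F {μ v w} := by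
  apply le_antisymm
  · rw [mulSubμ, Submodule.span_le]
    rintro z ⟨x, hx, y, hy, rfl⟩
    obtain ⟨a, rfl⟩ := Submodule.mem_span_singleton.mp hx
    obtain ⟨b, rfl⟩ := Submodule.mem_span_singleton.mp hy
    rw [h1, h2]
    exact Submodule.smul_mem _ _ (Submodule.smul_mem _ _ (Submodule.subset_span rfl))
  · rw [Submodule.span_le]
    rintro z rfl
    exact Submodule.subset_span ⟨v, Submodule.mem_span_singleton_self v, w,
      Submodule.mem_span_singleton_self w, rfl⟩

lemma mulA_smul_left (a : F) (x y : Fin 2 → F) : mulA (a • x) y = a • mulA x y := by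
  funext k; simp [mulA, mul_assoc]

lemma mulA_smul_right (a : F) (x y : Fin 2 → F) : mulA x (a • y) = a • mulA x y := by
  funext k; simp [mulA]; ring

lemma mulA'_smul_left (a : F) (x y : Fin 2 → F) : mulA' (a • x) y = a • mulA' x y := by
  funext k; fin_cases k <;> simp [mulA', mul_assoc]

lemma mulA'_smul_right (a : F) (x y : Fin 2 → F) : mulA' x (a • y) = a • mulA' x y := by
  funext k; fin_cases k <;> (simp [mulA']; ring)

lemma mulA_single (k : Fin 2) :
    mulA (Pi.single k 1 : Fin 2 → F) (Pi.single k 1) = Pi.single k 1 := by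
  funext l; by_cases h : k = l <;> simp [mulA, Pi.single_apply, h]

lemma fin2_cases (j : Fin 2) : j = 0 ∨ j = 1 := by revert j; decide

lemma mulA_single_ne {i j : Fin 2} (h : i ≠ j) :
    mulA (Pi.single i 1 : Fin 2 → F) (Pi.single j 1) = 0 := by
  funext l
  simp only [mulA, Pi.single_apply, Pi.zero_apply]
  split_ifs with hi hj hj <;> simp_all

lemma mulA'_single_zero :
    mulA' (Pi.single 0 1 : Fin 2 → F) (Pi.single 0 1) = Pi.single 1 1 := by
  funext l; fin_cases l <;> simp [mulA']

lemma mulA'_single_one :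
    mulA' (Pi.single 1 1 : Fin 2 → F) (Pi.single 1 1) = Pi.single 0 1 := by
  funext l; fin_cases l <;> simp [mulA']

lemma mulA'_single_ne {i j : Fin 2} (h : i ≠ j) :
    mulA' (Pi.single i 1 : Fin 2 → F) (Pi.single j 1) = 0 := by
  fin_cases i <;> fin_cases j <;> (try simp at h) <;>
    (funext l; fin_cases l <;> simp [mulA'])

lemma finrank_span_single (k : Fin 2) :
    finrank F (Submodule.span F {(Pi.single k 1 : Fin 2 → F)}) = 1 :=
  finrank_span_singleton (single_ne_zero' k)

end Aux

/-- **The δ-index is not a complete invariant.** The two-dimensional evolution algebras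
`A : e₁² = e₁, e₂² = e₂` and `A' : e₁² = e₂, e₂² = e₁` are both non-degenerate, both
have δ-index `(1,1)` (witnessed by the standard decomposition `⟨e₁⟩ ⊕ ⟨e₂⟩`), yet
they are not isomorphic. -/
theorem stmt_4 (F : Type*) [Field F] [IsAlgClosed F] [CharZero F] :
    Nondeg (F := F) (mulA (F := F)) ∧ Nondeg (F := F) (mulA' (F := F)) ∧
    IsStdDecompμ (F := F) (mulA (F := F))
      (fun k : Fin 2 => Submodule.span F {(Pi.single k 1 : Fin 2 → F)}) ∧
    IsStdDecompμ (F := F) (mulA' (F := F))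
      (fun k : Fin 2 => Submodule.span F {(Pi.single k 1 : Fin 2 → F)}) ∧
    ¬∃ φ : (Fin 2 → F) ≃ₗ[F] (Fin 2 → F),
        ∀ x y, φ (mulA x y) = mulA' (φ x) (φ y) := by
  have hb : ∀ i j : Fin 2, i ≠ j →
      mulA ((Pi.basisFun F (Fin 2)) i) ((Pi.basisFun F (Fin 2)) j) = 0 := by
    intro i j hij; simpa using mulA_single_ne (F := F) hij
  have hb' : ∀ i j : Fin 2, i ≠ j →
      mulA' ((Pi.basisFun F (Fin 2)) i) ((Pi.basisFun F (Fin 2)) j) = 0 := by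
    intro i j hij; simpa using mulA'_single_ne (F := F) hij
  have hspan : ∀ k : Fin 2, Submodule.span F {(Pi.single k 1 : Fin 2 → F)} =
      Submodule.span F (⇑(Pi.basisFun F (Fin 2)) '' {k}) := by
    intro k; rw [Set.image_singleton]; simp
  have htop : finrank F ↥(Submodule.span F {(Pi.single 0 1 : Fin 2 → F)} ⊔
      Submodule.span F {(Pi.single 1 1 : Fin 2 → F)}) = 2 := by
    rw [span_single_sup_top, finrank_top]
    simp
  refine ⟨?_, ?_, ⟨isInternal_single, ?_, ?_, ?_, ?_⟩, ⟨isInternal_single, ?_, ?_, ?_, ?_⟩, ?_⟩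
  · -- Nondeg mulA
    intro x h
    obtain ⟨h1, -⟩ := h x
    funext k
    have := congrFun h1 k
    simpa [mulA, mul_self_eq_zero] using this
  · -- Nondeg mulA'
    intro x h
    obtain ⟨h1, -⟩ := h x
    funext k
    fin_cases k
    · have := congrFun h1 1
      simpa [mulA', mul_self_eq_zero] using this
    · have := congrFun h1 0
      simpa [mulA', mul_self_eq_zero] using this
  · -- bases for A
    intro k
    exact ⟨2, Pi.basisFun F (Fin 2), hb, {k}, hspan k⟩
  · -- finrank of E k * E k for A
    intro k
    rw [mulSub_span_singleton _ mulA_smul_left mulA_smul_right, mulA_single]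
    exact finrank_span_single k
  · -- E j * E k = ⊥ for A
    intro j k hjk
    rw [mulSub_span_singleton _ mulA_smul_left mulA_smul_right, mulA_single_ne hjk,
      Submodule.span_zero_singleton]
  · -- finrank of sup for A
    intro j k hjk
    rcases fin2_cases j with rfl | rfl <;> rcases fin2_cases k with rfl | rfl <;>
        [exact absurd rfl hjk; skip; skip; exact absurd rfl hjk] <;>
      rw [mulSub_span_singleton _ mulA_smul_left mulA_smul_right,
        mulSub_span_singleton _ mulA_smul_left mulA_smul_right, mulA_single, mulA_single]
    · exact htop
    · rw [sup_comm]; exact htop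
  · -- bases for A'
    intro k
    exact ⟨2, Pi.basisFun F (Fin 2), hb', {k}, hspan k⟩
  · -- finrank of E k * E k for A'
    intro k
    rw [mulSub_span_singleton _ mulA'_smul_left mulA'_smul_right]
    rcases fin2_cases k with rfl | rfl
    · rw [mulA'_single_zero]; exact finrank_span_single 1
    · rw [mulA'_single_one]; exact finrank_span_single 0
  · -- E j * E k = ⊥ for A'
    intro j k hjk
    rw [mulSub_span_singleton _ mulA'_smul_left mulA'_smul_right, mulA'_single_ne hjk,
      Submodule.span_zero_singleton]
  · -- finrank of sup for A'
    intro j k hjk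
    rcases fin2_cases j with rfl | rfl <;> rcases fin2_cases k with rfl | rfl <;>
        [exact absurd rfl hjk; skip; skip; exact absurd rfl hjk] <;>
      rw [mulSub_span_singleton _ mulA'_smul_left mulA'_smul_right,
        mulSub_span_singleton _ mulA'_smul_left mulA'_smul_right]
    · rw [mulA'_single_zero, mulA'_single_one]; rw [sup_comm]; exact htop
    · rw [mulA'_single_zero, mulA'_single_one]; exact htop
  · -- not isomorphic
    rintro ⟨φ, hφ⟩
    set u := φ (fun _ => 1) with hu
    have hunit : ∀ z : Fin 2 → F, mulA' u z = z := by
      intro z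
      have h1 : mulA (fun _ => 1) (φ.symm z) = φ.symm z := by
        funext k; simp [mulA]
      have := hφ (fun _ => 1) (φ.symm z)
      rw [h1, φ.apply_symm_apply] at this
      exact this.symm
    have h0 := congrFun (hunit (Pi.single 0 1)) 0
    simp [mulA', Pi.single_apply] at h0
end

section
/- Every linear automorphism φ of the evolution algebra I_n over an algebraically closed field F of characteristic zero, with matrix (v_{jk}) in the basis {e_1,...,e_n}, satisfies: v_{21} = i·v_{11} − i, v_{22} = i·v_{12} + 1, v_{k2} = i·v_{k1} for k ≥ 3, Σ_{k=1}^n v_{ki}² = v_{11} + i·v_{12} for each i, and Σ_{k=1}^n v_{ki}v_{kj} = 0 for i ≠ j; equivalently, φᵀφ = (v_{11} + i·v_{12})·Id. Conversely, every such matrix defines an automorphism of I_n. -/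
/-- The evolution algebra `I_n` on `Fin (n+2) → F`: `eₖ² = e₀ + I·e₁` (`I² = -1`),
`eₖeₗ = 0` for `k ≠ l`. -/
def inMul {F : Type*} [Field F] {n : ℕ} (I : F) (x y : Fin (n + 2) → F) :
    Fin (n + 2) → F :=
  fun k => if k = 0 then ∑ i, x i * y i
    else if k = 1 then I * ∑ i, x i * y i else 0

/-- **Automorphisms of `I_n`.** A linear automorphism `φ` of `I_n`, with matrix
`V j k = φ(eₖ) j`, is multiplicative iff `V 1 0 = I·V 0 0 − I`, `V 1 1 = I·V 0 1 + 1`,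
`V k 1 = I·V k 0` for `k ≥ 2`, every column satisfies `∑ₖ (V k a)² = V 0 0 + I·V 0 1`,
and distinct columns are orthogonal (`φᵀφ = (V 0 0 + I·V 0 1)·1`). -/
theorem stmt_8 (F : Type*) [Field F] [IsAlgClosed F] [CharZero F]
    (I : F) (hI : I ^ 2 = -1)
    (n : ℕ) (φ : (Fin (n + 2) → F) ≃ₗ[F] (Fin (n + 2) → F)) :
    (∀ x y, φ (inMul I x y) = inMul I (φ x) (φ y)) ↔
      (φ (Pi.single 0 1) 1 = I * φ (Pi.single 0 1) 0 - I ∧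
       φ (Pi.single 1 1) 1 = I * φ (Pi.single 1 1) 0 + 1 ∧
       (∀ k : Fin (n + 2), k ≠ 0 → k ≠ 1 →
          φ (Pi.single 1 1) k = I * φ (Pi.single 0 1) k) ∧
       (∀ a : Fin (n + 2),
          ∑ k, φ (Pi.single a 1) k ^ 2 =
            φ (Pi.single 0 1) 0 + I * φ (Pi.single 1 1) 0) ∧
       (∀ a b : Fin (n + 2), a ≠ b →
          ∑ k, φ (Pi.single a 1) k * φ (Pi.single b 1) k = 0)) := by
  have h01 : (0 : Fin (n+2)) ≠ 1 := by
    simp [Fin.ext_iff]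
  -- the "target" vector w = e₀ + I e₁
  set w : Fin (n+2) → F := fun k => if k = 0 then 1 else if k = 1 then I else 0 with hwdef
  have hw0 : w 0 = 1 := by simp [hwdef]
  have hw1 : w 1 = I := by simp [hwdef, Ne.symm h01]
  have hwk : ∀ k : Fin (n+2), k ≠ 0 → k ≠ 1 → w k = 0 := by
    intro k hk0 hk1; simp [hwdef, hk0, hk1]
  have hmulw : ∀ x y : Fin (n+2) → F, inMul I x y = (∑ i, x i * y i) • w := by
    intro x y; funext k
    simp only [inMul, hwdef, Pi.smul_apply, smul_eq_mul]
    split_ifs <;> ring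
  have hw01 : w = (Pi.single 0 1 : Fin (n+2) → F) + I • (Pi.single 1 1 : Fin (n+2) → F) := by
    funext k
    simp only [hwdef, Pi.add_apply, Pi.smul_apply, Pi.single_apply, smul_eq_mul]
    split_ifs with h1 h2 <;> simp_all
  -- sums of basis products
  have hsingle : ∀ a b : Fin (n+2),
      (∑ i, (Pi.single a 1 : Fin (n+2) → F) i * (Pi.single b 1 : Fin (n+2) → F) i)
        = if a = b then 1 else 0 := by
    intro a b
    have key : ∀ i : Fin (n+2), (Pi.single a 1 : Fin (n+2) → F) i * (Pi.single b 1 : Fin (n+2) → F) i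
        = if i = a then (Pi.single b 1 : Fin (n+2) → F) i else 0 := by
      intro i
      simp only [Pi.single_apply]
      split_ifs <;> simp_all
    rw [Finset.sum_congr rfl fun i _ => key i, Finset.sum_ite_eq' Finset.univ a]
    simp [Pi.single_apply]
  have hsingle_self : ∀ a : Fin (n+2),
      (∑ i, (Pi.single a 1 : Fin (n+2) → F) i * (Pi.single a 1 : Fin (n+2) → F) i) = 1 := by
    intro a; rw [hsingle]; simp
  have hsingle_ne : ∀ a b : Fin (n+2), a ≠ b →
      (∑ i, (Pi.single a 1 : Fin (n+2) → F) i * (Pi.single b 1 : Fin (n+2) → F) i) = 0 := by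
    intro a b hab; rw [hsingle]; simp [hab]
  -- splitting a sum whose terms vanish outside {0, 1}
  have hsum01 : ∀ f : Fin (n+2) → F, (∀ k, k ≠ 0 → k ≠ 1 → f k = 0) →
      ∑ k, f k = f 0 + f 1 := by
    intro f hf
    have key : ∀ k : Fin (n+2),
        f k = (if k = 0 then f 0 else 0) + (if k = 1 then f 1 else 0) := by
      intro k
      by_cases h0 : k = 0
      · subst h0; simp [h01]
      · by_cases h1 : k = 1
        · subst h1; simp [Ne.symm h01]
        · simp [h0, h1, hf k h0 h1]
    rw [Finset.sum_congr rfl fun k _ => key k, Finset.sum_add_distrib,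
      Finset.sum_ite_eq' Finset.univ (0 : Fin (n+2)) (fun _ => f 0),
      Finset.sum_ite_eq' Finset.univ (1 : Fin (n+2)) (fun _ => f 1)]
    simp
  set c : F := φ (Pi.single 0 1) 0 + I * φ (Pi.single 1 1) 0 with hcdef
  have hφw0 : φ w 0 = c := by
    rw [hw01, map_add, map_smul]
    simp [hcdef]
  constructor
  · rintro h
    -- column norms
    have hnorm : ∀ a : Fin (n+2), ∑ k, φ (Pi.single a 1) k ^ 2 = c := by
      intro a
      have hh := h (Pi.single a 1) (Pi.single a 1)
      rw [hmulw, hmulw, hsingle_self a, one_smul] at hh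
      have h0 := congrFun hh 0
      rw [hφw0, Pi.smul_apply, hw0, smul_eq_mul, mul_one] at h0
      rw [h0]
      apply Finset.sum_congr rfl; intro k _; ring
    -- orthogonality
    have horth : ∀ a b : Fin (n+2), a ≠ b →
        ∑ k, φ (Pi.single a 1) k * φ (Pi.single b 1) k = 0 := by
      intro a b hab
      have hh := h (Pi.single a 1) (Pi.single b 1)
      rw [hmulw, hmulw, hsingle_ne a b hab, zero_smul, map_zero] at hh
      have h0 := congrFun hh.symm 0
      rw [Pi.smul_apply, hw0, smul_eq_mul, mul_one, Pi.zero_apply] at h0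
      exact h0
    -- φ w = c • w
    have hφweq : φ w = c • w := by
      have hh := h (Pi.single 0 1) (Pi.single 0 1)
      rw [hmulw, hmulw, hsingle_self 0, one_smul] at hh
      rw [hh]
      congr 1
      rw [← hnorm 0]
      apply Finset.sum_congr rfl; intro k _; ring
    have hcne : c ≠ 0 := by
      intro hc0
      have hz : φ w = 0 := by rw [hφweq, hc0, zero_smul]
      have hwz : w = 0 := (LinearEquiv.map_eq_zero_iff φ).mp hz
      have := congrFun hwz 0
      rw [hw0, Pi.zero_apply] at this
      exact one_ne_zero this
    -- componentwise form of φ w = c • w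
    have hcomp : ∀ k : Fin (n+2),
        φ (Pi.single 0 1) k + I * φ (Pi.single 1 1) k = c * w k := by
      intro k
      have hh : (φ (Pi.single 0 1) + I • φ (Pi.single 1 1)) k = (c • w) k := by
        rw [← map_smul, ← map_add, ← hw01, hφweq]
      simpa using hh
    -- component ≥ 2 of φ w = c • w
    have hk2 : ∀ k : Fin (n+2), k ≠ 0 → k ≠ 1 →
        φ (Pi.single 1 1) k = I * φ (Pi.single 0 1) k := by
      intro k hk0 hk1
      have hh := hcomp k
      rw [hwk k hk0 hk1, mul_zero] at hh
      linear_combination (-I) * hh + φ (Pi.single 1 1) k * hI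
    -- component 1 of φ w = c • w
    have heq1 : φ (Pi.single 0 1) 1 + I * φ (Pi.single 1 1) 1 = I * c := by
      have hh := hcomp 1
      rw [hw1] at hh
      linear_combination hh
    -- the 2c identity
    have heq2 : φ (Pi.single 0 1) 0 ^ 2 + φ (Pi.single 1 1) 0 ^ 2
        + φ (Pi.single 0 1) 1 ^ 2 + φ (Pi.single 1 1) 1 ^ 2 = 2 * c := by
      have hsum : ∑ k, (φ (Pi.single (0:Fin (n+2)) (1:F)) k ^ 2 + φ (Pi.single 1 1) k ^ 2)
          = (φ (Pi.single (0:Fin (n+2)) (1:F)) 0 ^ 2 + φ (Pi.single 1 1) 0 ^ 2)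
          + (φ (Pi.single (0:Fin (n+2)) (1:F)) 1 ^ 2 + φ (Pi.single 1 1) 1 ^ 2) := by
        apply hsum01
        intro k hk0 hk1
        rw [hk2 k hk0 hk1]
        linear_combination φ (Pi.single 0 1) k ^ 2 * hI
      rw [Finset.sum_add_distrib, hnorm 0, hnorm 1] at hsum
      linear_combination -hsum
    set a := φ (Pi.single (0:Fin (n+2)) (1:F)) 0 with hadef
    set b := φ (Pi.single (1:Fin (n+2)) (1:F)) 0 with hbdef
    set p := φ (Pi.single (0:Fin (n+2)) (1:F)) 1 with hpdef
    set q := φ (Pi.single (1:Fin (n+2)) (1:F)) 1 with hqdef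
    have hc : c = a + I * b := hcdef
    have hq : q = I * b + 1 := by
      have h2 : (2:F) ≠ 0 := two_ne_zero
      have key : (2 * c) * q = (2 * c) * (I * b + 1) := by
        linear_combination heq2 - (p + I*c - I*q) * heq1 - ((c-q)^2 + b^2) * hI
          + (c + a - I*b) * hc
      exact mul_left_cancel₀ (mul_ne_zero h2 hcne) key
    have hp : p = I * a - I := by
      linear_combination heq1 - I * hq - I * hc
    exact ⟨hp, hq, hk2, hnorm, horth⟩
  · rintro ⟨h1, h2, h3, h4, h5⟩ x y
    -- φ w = c • w
    have hcomp : ∀ k : Fin (n+2),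
        φ (Pi.single 0 1) k + I * φ (Pi.single 1 1) k = c * w k := by
      intro k
      by_cases hk0 : k = 0
      · subst hk0
        rw [hw0, mul_one, hcdef]
      · by_cases hk1 : k = 1
        · subst hk1
          rw [hw1, h1, h2, hcdef]
          ring
        · rw [hwk k hk0 hk1, mul_zero, h3 k hk0 hk1]
          linear_combination φ (Pi.single 0 1) k * hI
    have hφweq : φ w = c • w := by
      rw [hw01, map_add, map_smul]
      funext k
      have hck := hcomp k
      rw [hw01] at hck
      simpa using hck
    -- expansion of φ x
    have hφx : ∀ (x : Fin (n+2) → F) (k : Fin (n+2)),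
        φ x k = ∑ i, x i * φ (Pi.single i 1) k := by
      intro x k
      conv_lhs => rw [show x = ∑ i, x i • (Pi.single i 1 : Fin (n+2) → F) by
        simp [← Pi.single_smul, Finset.univ_sum_single]]
      rw [map_sum, Finset.sum_apply]
      simp
    -- the key bilinear identity
    have hS : ∑ k, φ x k * φ y k = c * ∑ i, x i * y i := by
      have expand : ∀ k, φ x k * φ y k
          = ∑ i, ∑ j, x i * y j * (φ (Pi.single i 1) k * φ (Pi.single j 1) k) := by
        intro k
        rw [hφx x k, hφx y k, Finset.sum_mul_sum]
        apply Finset.sum_congr rfl; intro i _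
        apply Finset.sum_congr rfl; intro j _
        ring
      rw [Finset.sum_congr rfl fun k _ => expand k]
      rw [Finset.sum_comm]
      have inner : ∀ i : Fin (n+2),
          (∑ k, ∑ j, x i * y j * (φ (Pi.single i 1) k * φ (Pi.single j 1) k))
          = x i * y i * c := by
        intro i
        rw [Finset.sum_comm]
        have step : ∀ j : Fin (n+2),
            (∑ k, x i * y j * (φ (Pi.single i 1) k * φ (Pi.single j 1) k))
            = if j = i then x i * y i * c else 0 := by
          intro j
          rw [← Finset.mul_sum]
          by_cases hij : j = i
          · subst hij
            rw [if_pos rfl]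
            have hsq : (∑ k, φ (Pi.single j 1) k * φ (Pi.single j (1:F)) k)
                = ∑ k, φ (Pi.single j 1) k ^ 2 := by
              apply Finset.sum_congr rfl; intro k _; ring
            rw [hsq, h4 j]
          · rw [if_neg hij, h5 i j (fun hh => hij hh.symm), mul_zero]
        rw [Finset.sum_congr rfl fun j _ => step j, Finset.sum_ite_eq' Finset.univ i]
        simp
      rw [Finset.sum_congr rfl fun i _ => inner i, Finset.mul_sum]
      apply Finset.sum_congr rfl; intro i _; ring
    rw [hmulw, hmulw, map_smul, hφweq, hS, smul_smul, mul_comm]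
end

section
/- Let D be a derivation of an evolution algebra A with natural basis {e_1,...,e_n}, over a field of characteristic ≠ 2, with matrix (d_{ij}). Then for all i ≠ j, d_{ij}·e_i² + d_{ji}·e_j² = 0; in particular, if e_i² and e_j² are linearly independent, then d_{ij} = d_{ji} = 0. -/
/-!
In an evolution algebra only the `j`-th coordinate of `x` survives in `x * b j` and in
`b j * x`. So the Leibniz rule applied to `b i * b j = 0` (`i ≠ j`) reads
`0 = D (b i) * b j + b i * D (b j) = d j i • b j² + d i j • b i²`, with
`d i j = b.repr (D (b j)) i`, and linear independence of `b i²`, `b j²` kills both coefficients.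
-/

section EvolutionBasis

variable {R A ι : Type*} [CommSemiring R] [NonUnitalNonAssocSemiring A] [Module R A]
  {b : Module.Basis ι R A}

theorem mul_basis_eq_repr_smul_sq [IsScalarTower R A A] (hb : ∀ i j, i ≠ j → b i * b j = 0)
    (x : A) (j : ι) : x * b j = b.repr x j • (b j * b j) := by
  suffices LinearMap.mulRight R (b j) = (b.coord j).smulRight (b j * b j) from
    LinearMap.congr_fun this x
  refine b.ext fun i => ?_
  rcases eq_or_ne i j with rfl | hij
  · simp
  · simp [hb i j hij, Finsupp.single_eq_of_ne' hij]

theorem basis_mul_eq_repr_smul_sq [SMulCommClass R A A] (hb : ∀ i j, i ≠ j → b i * b j = 0)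
    (x : A) (i : ι) : b i * x = b.repr x i • (b i * b i) := by
  suffices LinearMap.mulLeft R (b i) = (b.coord i).smulRight (b i * b i) from
    LinearMap.congr_fun this x
  refine b.ext fun j => ?_
  rcases eq_or_ne j i with rfl | hji
  · simp
  · simp [hb i j hji.symm, Finsupp.single_eq_of_ne' hji]

theorem repr_derivation_smul_sq_add_eq_zero [SMulCommClass R A A] [IsScalarTower R A A]
    (hb : ∀ i j, i ≠ j → b i * b j = 0) (D : A →ₗ[R] A)
    (hD : ∀ x y : A, D (x * y) = D x * y + x * D y) {i j : ι} (hij : i ≠ j) :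
    b.repr (D (b j)) i • (b i * b i) + b.repr (D (b i)) j • (b j * b j) = 0 := by
  have := hD (b i) (b j)
  rw [hb i j hij, map_zero, mul_basis_eq_repr_smul_sq hb (D (b i)) j,
    basis_mul_eq_repr_smul_sq hb (D (b j)) i] at this
  rw [add_comm, this]

end EvolutionBasis

theorem stmt_12_general {F : Type*} [Field F]
    {A : Type*} [NonUnitalNonAssocRing A] [Module F A]
    [SMulCommClass F A A] [IsScalarTower F A A]
    {n : ℕ} (b : Module.Basis (Fin n) F A)
    (hb : ∀ i j : Fin n, i ≠ j → b i * b j = 0)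
    (D : A →ₗ[F] A) (hD : ∀ x y : A, D (x * y) = D x * y + x * D y) :
    ∀ i j : Fin n, i ≠ j →
      (b.repr (D (b j)) i • (b i * b i) + b.repr (D (b i)) j • (b j * b j) = 0 ∧
       (LinearIndependent F ![b i * b i, b j * b j] →
          b.repr (D (b j)) i = 0 ∧ b.repr (D (b i)) j = 0)) := by
  intro i j hij
  have hsum := repr_derivation_smul_sq_add_eq_zero hb D hD hij
  exact ⟨hsum, fun hli => LinearIndependent.pair_iff.mp hli _ _ hsum⟩

/-- **Off-diagonal constraints on derivations of evolution algebras.**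
If `D` is a derivation of an evolution algebra with natural basis `b` and matrix
`d i j = (b.repr (D (b j))) i`, then for `i ≠ j` one has
`d i j • bᵢ² + d j i • bⱼ² = 0`; in particular if `bᵢ²` and `bⱼ²` are linearly
independent then `d i j = d j i = 0`. -/
theorem stmt_12 {F : Type*} [Field F] (hchar : ringChar F ≠ 2)
    {A : Type*} [NonUnitalNonAssocRing A] [Module F A]
    [SMulCommClass F A A] [IsScalarTower F A A]
    {n : ℕ} (b : Module.Basis (Fin n) F A)
    (hb : ∀ i j : Fin n, i ≠ j → b i * b j = 0)
    (D : A →ₗ[F] A) (hD : ∀ x y : A, D (x * y) = D x * y + x * D y) :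
    ∀ i j : Fin n, i ≠ j →
      (b.repr (D (b j)) i • (b i * b i) + b.repr (D (b i)) j • (b j * b j) = 0 ∧
       (LinearIndependent F ![b i * b i, b j * b j] →
          b.repr (D (b j)) i = 0 ∧ b.repr (D (b i)) j = 0)) :=
  stmt_12_general b hb D hD
end

section
/- Let p = 2^n − 1 be a Mersenne prime, and let A be the n-dimensional evolution algebra over a field of characteristic p with basis {e_1,...,e_n} and products e_i² = e_{i+1} for i < n, e_n² = e_1, e_ie_j = 0 for i ≠ j. Then the linear map D defined by D(e_i) = 2^{i−1}·e_i for 1 ≤ i ≤ n is a nonzero derivation of A. -/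
/-- The cyclic evolution algebra on `Fin n → F`: `eᵢ² = e_{i+1}` (indices mod `n`),
`eᵢeⱼ = 0` for `i ≠ j`. -/
def cycMul {F : Type*} [Field F] {n : ℕ} (x y : Fin n → F) : Fin n → F :=
  fun k => ∑ i : Fin n, if (k : ℕ) = (i.val + 1) % n then x i * y i else 0

/-- The linear map `D(eᵢ) = 2^i • eᵢ` (zero-indexed; this is `2^{i-1}` one-indexed). -/
def doubling (F : Type*) [Field F] (n : ℕ) : (Fin n → F) →ₗ[F] (Fin n → F) where
  toFun x := fun k => 2 ^ (k : ℕ) * x k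
  map_add' x y := by funext k; simp [mul_add]
  map_smul' c x := by
    funext k
    simp only [Pi.smul_apply, smul_eq_mul, RingHom.id_apply]
    ring

/-- **Nonzero derivations in Mersenne prime characteristic.** If `p = 2ⁿ − 1` is a
Mersenne prime and `F` has characteristic `p`, the map `D(eᵢ) = 2^{i-1}·eᵢ` is a
nonzero derivation of the cyclic evolution algebra `eᵢ² = e_{i+1}`, `eₙ² = e₁`. -/
theorem stmt_13 (p n : ℕ) (hp : p.Prime) (hpn : p = 2 ^ n - 1)
    (F : Type*) [Field F] [CharP F p] :
    doubling F n ≠ 0 ∧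
    ∀ x y : Fin n → F,
      doubling F n (cycMul x y) =
        cycMul (doubling F n x) y + cycMul x (doubling F n y) := by
  have hn : 0 < n := by
    rcases Nat.eq_zero_or_pos n with h | h
    · exfalso; subst h; simp at hpn; subst hpn; exact Nat.not_prime_zero hp
    · exact h
  have h2n : (2 : F) ^ n = 1 := by
    have hnat : (2 : ℕ) ^ n = p + 1 := by
      have : 1 ≤ 2 ^ n := Nat.one_le_two_pow
      omega
    have := CharP.cast_eq_zero F p
    calc (2 : F) ^ n = ((2 ^ n : ℕ) : F) := by push_cast; ring
      _ = ((p + 1 : ℕ) : F) := by rw [hnat]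
      _ = 1 := by push_cast [this]; ring
  constructor
  · intro h
    have := congrFun (congrArg (fun f => f.toFun (fun _ => (1 : F))) h) ⟨0, hn⟩
    simp [doubling] at this
  · intro x y
    funext k
    show (2 : F) ^ (k : ℕ) * cycMul x y k = _
    simp only [cycMul, Pi.add_apply, Finset.mul_sum, ← Finset.sum_add_distrib]
    apply Finset.sum_congr rfl
    intro i _
    by_cases h : (k : ℕ) = (i.val + 1) % n
    · simp only [if_pos h]
      show (2:F)^(k:ℕ) * (x i * y i) = (2:F)^(i:ℕ) * x i * y i + x i * ((2:F)^(i:ℕ) * y i)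
      have key : (2 : F) ^ (k : ℕ) = 2 * (2 : F) ^ (i : ℕ) := by
        rcases Nat.lt_or_ge (i.val + 1) n with hlt | hge
        · rw [h, Nat.mod_eq_of_lt hlt, pow_succ]; ring
        · have hin : i.val + 1 = n := by omega
          have hk0 : (k : ℕ) = 0 := by rw [h, hin]; simp
          calc (2 : F) ^ (k : ℕ) = 1 := by rw [hk0, pow_zero]
            _ = (2 : F) ^ n := h2n.symm
            _ = (2 : F) ^ ((i : ℕ) + 1) := (congrArg (fun m => (2:F) ^ m) hin).symm
            _ = 2 * (2 : F) ^ (i : ℕ) := by rw [pow_succ]; ring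
      rw [key]; ring
    · simp [h]
end

section
/- Every complex n-dimensional commutative (not necessarily associative) algebra A with dim A² = 1 is an evolution algebra; that is, A admits a basis {f_1,...,f_n} with f_i f_j = 0 for all i ≠ j. -/
/-!
A commutative product with values in the line `A²` is, after choosing a coordinate on that line,
a symmetric bilinear form on `A`. Away from characteristic two a symmetric bilinear form has an
orthogonal basis, and in that basis all products of distinct basis vectors vanish.
-/

open Module

theorem LinearMap.exists_orthogonal_basis_of_finrank_eq_one {K V N : Type*} [Field K]
    [Invertible (2 : K)] [AddCommGroup V] [Module K V] [FiniteDimensional K V]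
    [AddCommGroup N] [Module K N] (m : V →ₗ[K] V →ₗ[K] N) (hm : ∀ x y, m x y = m y x)
    (hN : finrank K N = 1) :
    ∃ b : Basis (Fin (finrank K V)) K V, ∀ i j, i ≠ j → m (b i) (b j) = 0 := by
  have : Module.Finite K N := Module.finite_of_finrank_eq_succ hN
  let e : N ≃ₗ[K] K := LinearEquiv.ofFinrankEq N K (by rw [hN, finrank_self])
  let B : LinearMap.BilinForm K V := m.compr₂ e.toLinearMap
  have hB : LinearMap.IsSymm B := ⟨fun x y => by simp [B, hm x y]⟩
  obtain ⟨b, hb⟩ := LinearMap.BilinForm.exists_orthogonal_basis hB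
  exact ⟨b, fun i j hij => e.map_eq_zero_iff.mp (hb hij)⟩

theorem exists_evolution_basis_of_finrank_span_mul_eq_one {K A : Type*} [Field K]
    [Invertible (2 : K)] [NonUnitalNonAssocRing A] [Module K A] [SMulCommClass K A A]
    [IsScalarTower K A A] [FiniteDimensional K A] (hcomm : ∀ x y : A, x * y = y * x)
    (hsq : finrank K (Submodule.span K {z : A | ∃ x y : A, z = x * y}) = 1) :
    ∃ b : Basis (Fin (finrank K A)) K A, ∀ i j, i ≠ j → b i * b j = 0 := by
  set P : Set A := {z | ∃ x y : A, z = x * y}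
  have hP : ∀ x y : A, x * y ∈ LinearMap.range (Submodule.span K P).subtype := fun x y => by
    simpa using Submodule.subset_span (s := P) ⟨x, y, rfl⟩
  let m := (LinearMap.mul K A).codRestrict₂ _ (Submodule.span K P).injective_subtype hP
  have hm : ∀ x y, (m x y : A) = x * y :=
    LinearMap.codRestrict₂_apply (LinearMap.mul K A) _ _ hP
  obtain ⟨b, hb⟩ := m.exists_orthogonal_basis_of_finrank_eq_one
    (fun x y => Subtype.ext (by rw [hm, hm, hcomm])) hsq
  exact ⟨b, fun i j hij => by rw [← hm, hb i j hij, Submodule.coe_zero]⟩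

/-- **Commutative algebras with one-dimensional square are evolution algebras.**
Every complex `n`-dimensional commutative (not necessarily associative) algebra `A`
with `dim A² = 1` admits a basis `{f₁,...,fₙ}` with `fᵢfⱼ = 0` for `i ≠ j`. -/
theorem stmt_14 {A : Type*} [NonUnitalNonAssocRing A] [Module ℂ A]
    [SMulCommClass ℂ A A] [IsScalarTower ℂ A A] [FiniteDimensional ℂ A]
    (hcomm : ∀ x y : A, x * y = y * x)
    {n : ℕ} (hdim : Module.finrank ℂ A = n)
    (hsq : Module.finrank ℂ
      (Submodule.span ℂ {z : A | ∃ x y : A, z = x * y}) = 1) :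
    ∃ b : Module.Basis (Fin n) ℂ A, ∀ i j : Fin n, i ≠ j → b i * b j = 0 := by
  subst hdim
  have : Invertible (2 : ℂ) := invertibleOfNonzero two_ne_zero
  exact exists_evolution_basis_of_finrank_span_mul_eq_one hcomm hsq
end
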